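/- arXiv:2408.06191 — 3 statements merged into one kernel-verified Lean document; each statement's English description precedes it below -/
import Mathlib

section
/- For all k, l ≥ 1 and invariant functions f ∈ C_k, g ∈ C_l, Harish-Chandra induction is commutative: R^{k+l}_{k,l}(f ⊠ g) = R^{k+l}_{l,k}(g ⊠ f), where f ⊠ g denotes the function (x,y) ↦ f(x)·g(y). -/
open Matrix BigOperators

namespace HCPaper

open scoped Classical

/-- `gl F n` : the additive group of `n × n` matrices over `F`. -/
abbrev gl (F : Type) (n : ℕ) := Matrix (Fin n) (Fin n) F

variable {F : Type} [Field F] [Fintype F] [DecidableEq F]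

/-- Conjugation (adjoint) action of `GL_n(F)` on `gl_n(F)`. -/
def conjM {n : ℕ} (g : Matrix.GeneralLinearGroup (Fin n) F) (x : gl F n) : gl F n :=
  (g : Matrix (Fin n) (Fin n) F) * x * ((g⁻¹ : Matrix.GeneralLinearGroup (Fin n) F) : Matrix (Fin n) (Fin n) F)

/-- A function `f : gl_n(F) → ℂ` is invariant if it is constant on `GL_n(F)`-conjugacy orbits. -/
def Invariant (n : ℕ) (f : gl F n → ℂ) : Prop :=
  ∀ (g : Matrix.GeneralLinearGroup (Fin n) F) (x : gl F n), f (conjM g x) = f x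

/-- Invariance for functions on `gl_k(F) × gl_l(F)` under `GL_k(F) × GL_l(F)`. -/
def Invariant₂ (k l : ℕ) (h : gl F k × gl F l → ℂ) : Prop :=
  ∀ (g₁ : Matrix.GeneralLinearGroup (Fin k) F) (g₂ : Matrix.GeneralLinearGroup (Fin l) F)
    (x : gl F k) (y : gl F l), h (conjM g₁ x, conjM g₂ y) = h (x, y)

/-- Transport of matrices along an equality of sizes. -/
def castM {m n : ℕ} (h : m = n) (x : gl F m) : gl F n :=
  Matrix.reindex (finCongr h) (finCongr h) x

/-- Transport of functions along an equality of sizes. -/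
def castFun {m n : ℕ} (h : m = n) (f : gl F m → ℂ) : gl F n → ℂ :=
  fun x => f (castM h.symm x)

/-- The block upper-triangular matrix `[x u; 0 y]`, viewed in `gl_{k+l}(F)`. -/
def but (k l : ℕ) (x : gl F k) (u : Matrix (Fin k) (Fin l) F) (y : gl F l) : gl F (k + l) :=
  Matrix.reindex finSumFinEquiv finSumFinEquiv (Matrix.fromBlocks x u 0 y)

/-- The block lower-triangular matrix `[x 0; v y]`, viewed in `gl_{k+l}(F)`. -/
def blt (k l : ℕ) (x : gl F k) (v : Matrix (Fin l) (Fin k) F) (y : gl F l) : gl F (k + l) :=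
  Matrix.reindex finSumFinEquiv finSumFinEquiv (Matrix.fromBlocks x 0 v y)

/-- View a matrix in `gl_{k+l}(F)` as a `2 × 2`-block matrix. -/
def blk (k l : ℕ) (m : gl F (k + l)) : Matrix (Fin k ⊕ Fin l) (Fin k ⊕ Fin l) F :=
  Matrix.reindex finSumFinEquiv.symm finSumFinEquiv.symm m

/-- Membership in `P_{k,l}` : being block upper triangular with blocks of sizes `k, l`. -/
def IsBUT (k l : ℕ) (m : gl F (k + l)) : Prop := Matrix.toBlocks₂₁ (blk k l m) = 0

/-- The projection `π : P_{k,l} → gl_k(F) × gl_l(F)` deleting the off-diagonal block. -/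
def proj (k l : ℕ) (m : gl F (k + l)) : gl F k × gl F l :=
  (Matrix.toBlocks₁₁ (blk k l m), Matrix.toBlocks₂₂ (blk k l m))

/-- The order of the group `P^×_{k,l}` of invertible block upper-triangular matrices. -/
noncomputable def Pcard (F : Type) [Field F] [Fintype F] [DecidableEq F] (k l : ℕ) : ℕ :=
  Nat.card {g : Matrix.GeneralLinearGroup (Fin (k + l)) F //
    IsBUT k l (g : Matrix (Fin (k + l)) (Fin (k + l)) F)}

/-- Harish-Chandra restriction `*R^{k+l}_{k,l}`; by convention it is the identity
(under the canonical identifications) when `k = 0` or `l = 0`. -/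
noncomputable def HCres (k l : ℕ) (f : gl F (k + l) → ℂ) : gl F k × gl F l → ℂ :=
  if hk : k = 0 then fun p => f (castM (by omega) p.2)
  else if hl : l = 0 then fun p => f (castM (by omega) p.1)
  else fun p =>
    ((Fintype.card F : ℂ) ^ (k * l))⁻¹ * ∑ u : Matrix (Fin k) (Fin l) F, f (but k l p.1 u p.2)

/-- Harish-Chandra induction `R^{k+l}_{k,l}`; by convention it is the identity
(under the canonical identifications) when `k = 0` or `l = 0`. -/
noncomputable def HCind (k l : ℕ) (h : gl F k × gl F l → ℂ) : gl F (k + l) → ℂ :=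
  if hk : k = 0 then fun z => h (0, castM (by omega) z)
  else if hl : l = 0 then fun z => h (castM (by omega) z, 0)
  else fun z =>
    ((Pcard F k l : ℂ))⁻¹ *
      ∑ g : Matrix.GeneralLinearGroup (Fin (k + l)) F,
        if IsBUT k l (conjM g z) then h (proj k l (conjM g z)) else 0

/-- The hermitian inner product on `C_n`. -/
noncomputable def inn (n : ℕ) (f g : gl F n → ℂ) : ℂ :=
  ((Fintype.card (Matrix.GeneralLinearGroup (Fin n) F) : ℂ))⁻¹ *
    ∑ x : gl F n, f x * (starRingEnd ℂ) (g x)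

/-- The hermitian inner product on invariant functions on `gl_k(F) × gl_l(F)`. -/
noncomputable def inn₂ (k l : ℕ) (f g : gl F k × gl F l → ℂ) : ℂ :=
  ((Fintype.card (Matrix.GeneralLinearGroup (Fin k) F) *
      Fintype.card (Matrix.GeneralLinearGroup (Fin l) F) : ℂ))⁻¹ *
    ∑ p : gl F k × gl F l, f p * (starRingEnd ℂ) (g p)

/-- `f ∈ C_n` is pre-cuspidal if all proper Harish-Chandra restrictions of `f` vanish. -/
def PreCuspidal (n : ℕ) (f : gl F n → ℂ) : Prop :=
  ∀ (k l : ℕ), 1 ≤ k → 1 ≤ l → ∀ hkl : k + l = n, HCres k l (castFun hkl.symm f) = 0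

/-- The composite `R_{(n_1,…,n_r)} ∘ *R_{(n_1,…,n_r)}` of the iterated two-block
Harish-Chandra induction and restriction along the composition `(n_1,…,n_r)`. -/
noncomputable def RcompRes : (L : List ℕ) → (gl F L.sum → ℂ) → gl F L.sum → ℂ
  | [], f => f
  | (k :: L), f =>
      castFun (List.sum_cons).symm
        (HCind k L.sum fun p =>
          RcompRes L (fun y => HCres k L.sum (castFun List.sum_cons f) (p.1, y)) p.2)

/-- The duality operation `𝒟_n(f) = Σ_{(n_1,…,n_r) ⊨ n} (-1)^{n-r}
R_{(n_1,…,n_r)}(*R_{(n_1,…,n_r)} f)`, the sum over all compositions of `n`. -/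
noncomputable def Dual (n : ℕ) (f : gl F n → ℂ) : gl F n → ℂ :=
  ∑ c : Composition n,
    ((-1 : ℂ)) ^ (n - c.length) •
      castFun c.blocks_sum (RcompRes c.blocks (castFun c.blocks_sum.symm f))

/-- `C_n`, the subspace of invariant functions, as a `ℂ`-submodule of all functions. -/
noncomputable def InvSub (F : Type) [Field F] (n : ℕ) : Submodule ℂ (gl F n → ℂ) where
  carrier := {f | Invariant n f}
  add_mem' := by
    intro a b ha hb g x
    simp only [Pi.add_apply]
    rw [ha g x, hb g x]
  zero_mem' := by intro g x; rfl
  smul_mem' := by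
    intro c f hf g x
    simp only [Pi.smul_apply]
    rw [hf g x]

/-- `χ` is the character of a finite-dimensional complex representation of the
additive group `gl_n(F)`. -/
def IsChar (n : ℕ) (χ : gl F n → ℂ) : Prop :=
  ∃ V : FDRep ℂ (Multiplicative (gl F n)),
    ∀ x : gl F n, FDRep.character V (Multiplicative.ofAdd x) = χ x

/-- An invariant character of `gl_n(F)`. -/
def IsInvChar (n : ℕ) (χ : gl F n → ℂ) : Prop := IsChar n χ ∧ Invariant n χ

/-- A character of the additive group `gl_k(F) × gl_l(F)`. -/
def IsChar₂ (k l : ℕ) (χ : gl F k × gl F l → ℂ) : Prop :=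
  ∃ V : FDRep ℂ (Multiplicative (gl F k × gl F l)),
    ∀ p : gl F k × gl F l, FDRep.character V (Multiplicative.ofAdd p) = χ p

/-- An invariant character of `gl_k(F) × gl_l(F)`. -/
def IsInvChar₂ (k l : ℕ) (χ : gl F k × gl F l → ℂ) : Prop := IsChar₂ k l χ ∧ Invariant₂ k l χ

/-- An irreducible invariant character: a nonzero invariant character which is not
the sum of two nonzero invariant characters. -/
def IrrInvChar (n : ℕ) (χ : gl F n → ℂ) : Prop :=
  IsInvChar n χ ∧ χ ≠ 0 ∧
    ¬ ∃ χ₁ χ₂ : gl F n → ℂ, IsInvChar n χ₁ ∧ IsInvChar n χ₂ ∧ χ₁ ≠ 0 ∧ χ₂ ≠ 0 ∧ χ = χ₁ + χ₂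

/-!
Let `τ` send `M ∈ gl_{k+l}` to `Mᵀ` with the two diagonal blocks exchanged. It maps `P_{k,l}` onto
`P_{l,k}`, acts on the projection by `(x, y) ↦ (yᵀ, xᵀ)`, and turns conjugation by `g` into
conjugation by `τ(g⁻¹)`. Reindexing the sum defining `R_{l,k}` along `g ↦ τ(g⁻¹)` therefore
expresses `R_{l,k}(g ⊠ f)` through `R_{k,l}` applied to `(x, y) ↦ f xᵀ · g yᵀ` at the point
`τ⁻¹(z)`. Neither change matters, because every square matrix over a field is conjugate to its
transpose: the `K[X]`-module defined by `A` is a sum of cyclic modules `K[X]/(q)`, and on each of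
them `(a, b) ↦ (top coefficient of a b mod q)` is a nondegenerate form for which multiplication by
`X` is self-adjoint; the Gram matrix `J` of the resulting form satisfies `J A = Aᵀ J`.
-/

section TransposeSimilarity

open Polynomial DirectSum

variable {K : Type*} [Field K]

theorem _root_.AdjoinRoot.exists_linearMap_mul_separating {q : K[X]} (hq : q.Monic) :
    ∃ t : AdjoinRoot q →ₗ[K] K, ∀ x, (∀ y, t (x * y) = 0) → x = 0 := by
  refine ⟨lcoeff K (q.natDegree - 1) ∘ₗ AdjoinRoot.modByMonicHom hq, fun x hx => ?_⟩
  obtain ⟨w, rfl⟩ := AdjoinRoot.mk_surjective x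
  set p := w %ₘ q
  have hpx : AdjoinRoot.mk q p = AdjoinRoot.mk q w := by
    simpa only [AdjoinRoot.modByMonicHom_mk] using AdjoinRoot.mk_leftInverse hq (AdjoinRoot.mk q w)
  by_contra hx0
  have hp : p ≠ 0 := by rintro h; rw [h, map_zero] at hpx; exact hx0 hpx.symm
  have hlt : p.natDegree < q.natDegree := natDegree_lt_natDegree hp (degree_modByMonic_lt w hq)
  set m := q.natDegree - 1 - p.natDegree
  -- multiplying by `X ^ m` moves the leading coefficient of `p` to the top coordinate
  have hpm : (p * X ^ m) %ₘ q = p * X ^ m :=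
    (modByMonic_eq_self_iff hq).2 (degree_lt_degree (by rw [natDegree_mul_X_pow m hp]; omega))
  have htop := hx (AdjoinRoot.mk q (X ^ m))
  rw [← hpx, ← map_mul, LinearMap.comp_apply, AdjoinRoot.modByMonicHom_mk, hpm, lcoeff_apply,
    show q.natDegree - 1 = p.natDegree + m by omega, coeff_mul_X_pow] at htop
  exact hp (leadingCoeff_eq_zero.1 htop)

theorem _root_.Polynomial.exists_linearMap_mul_separating_quot_span {g : K[X]} (hg : g ≠ 0) :
    ∃ t : (K[X] ⧸ K[X] ∙ g) →ₗ[K] K, ∀ x, (∀ y, t (x * y) = 0) → x = 0 := by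
  have : K[X] ∙ g = Ideal.span {normalize g} :=
    Ideal.span_singleton_eq_span_singleton.2 (associated_normalize g)
  rw [this]
  exact AdjoinRoot.exists_linearMap_mul_separating (monic_normalize hg)

theorem _root_.LinearMap.exists_separatingLeft_isAdjointPair_self {V : Type*} [AddCommGroup V]
    [Module K V] [FiniteDimensional K V] (φ : V →ₗ[K] V) :
    ∃ B : LinearMap.BilinForm K V, B.SeparatingLeft ∧ B.IsAdjointPair B φ φ := by
  obtain ⟨ι, _, p, hp, e, ⟨E⟩⟩ :=
    Module.equiv_directSum_of_isTorsion (Module.AEval.isTorsion_of_finiteDimensional K V φ)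
  choose t ht using fun i =>
    exists_linearMap_mul_separating_quot_span (pow_ne_zero (e i) (hp i).ne_zero)
  let E' : V ≃ₗ[K] ⨁ i, K[X] ⧸ K[X] ∙ p i ^ e i :=
    (Module.AEval'.of φ).trans (E.restrictScalars K)
  have hE' (v : V) : E' (φ v) = (X : K[X]) • E' v := by
    simp only [E', LinearEquiv.trans_apply, LinearEquiv.restrictScalars_apply,
      ← Module.AEval'.X_smul_of, map_smul]
  let B : LinearMap.BilinForm K V := ∑ i,
    ((LinearMap.mul K _).compr₂ (t i)).compl₁₂ (component K ι _ i ∘ₗ E'.toLinearMap)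
      (component K ι _ i ∘ₗ E'.toLinearMap)
  have hB (v w : V) : B v w = ∑ i, t i (E' v i * E' w i) := by
    simp [B, DirectSum.apply_eq_component K]
  refine ⟨B, fun v hv => ?_, fun v w => ?_⟩
  · by_contra hv0
    obtain ⟨i, hi⟩ : ∃ i, E' v i ≠ 0 := by
      by_contra! h
      exact hv0 (E'.map_eq_zero_iff.1 (DFinsupp.ext h))
    obtain ⟨y, hy⟩ : ∃ y, t i (E' v i * y) ≠ 0 := by
      by_contra! h
      exact hi (ht i _ h)
    apply hy
    have := hv (E'.symm (DirectSum.of _ i y))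
    rwa [hB, Finset.sum_eq_single i, LinearEquiv.apply_symm_apply, DirectSum.of_eq_same] at this
    · intro j _ hji
      rw [LinearEquiv.apply_symm_apply, DirectSum.of_eq_of_ne _ _ _ hji, mul_zero, map_zero]
    · simp
  · simp only [hB, hE', DirectSum.smul_apply, smul_mul_assoc, mul_smul_comm]

theorem _root_.Matrix.exists_mul_mul_inv_eq_transpose {n : Type*} [Fintype n]
    [DecidableEq n] (A : Matrix n n K) :
    ∃ P : GL n K, (P : Matrix n n K) * A * (P⁻¹ : GL n K) = Aᵀ := by
  obtain ⟨B, hB, hAB⟩ := (Matrix.toLin' A).exists_separatingLeft_isAdjointPair_self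
  set J := LinearMap.toMatrix₂' K B
  have hJ : J.det ≠ 0 :=
    Matrix.separatingLeft_iff_det_ne_zero.1 (LinearMap.separatingLeft_toMatrix₂'_iff.2 hB)
  have hJA : Aᵀ * J = J * A := by
    rw [← Matrix.toLinearMap₂'_toMatrix' (R := K) B] at hAB
    exact (isAdjointPair_toLinearMap₂' J J A A).1 hAB
  set P := Matrix.GeneralLinearGroup.mkOfDetNeZero J hJ
  have hPJ : (P : Matrix n n K) = J := rfl
  refine ⟨P, ?_⟩
  rw [hPJ, ← hJA, Matrix.mul_assoc, ← hPJ, Units.mul_inv, Matrix.mul_one]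

theorem _root_.Matrix.exists_mul_mul_inv_eq_reindex {R n : Type*} [CommRing R] [Fintype n]
    [DecidableEq n] (σ : Equiv.Perm n) (A : Matrix n n R) :
    ∃ P : GL n R, (P : Matrix n n R) * A * (P⁻¹ : GL n R) = Matrix.reindex σ σ A := by
  refine ⟨Matrix.permMatrixHom.toHomUnits σ, ?_⟩
  rw [← map_inv, MonoidHom.coe_toHomUnits, MonoidHom.coe_toHomUnits, Matrix.permMatrixHom_apply,
    Matrix.permMatrixHom_apply, inv_inv, PEquiv.toMatrix_toPEquiv_mul, PEquiv.mul_toMatrix_toPEquiv]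
  rfl

end TransposeSimilarity

section BlockTranspose

@[simp]
theorem _root_.finAddFlip_finAddFlip {m n : ℕ} (i : Fin (m + n)) :
    finAddFlip (finAddFlip i) = i :=
  Fin.addCases (fun a => by simp) (fun b => by simp) i

@[simp]
theorem _root_.finAddFlip_symm (m n : ℕ) :
    (finAddFlip : Fin (m + n) ≃ Fin (n + m)).symm = finAddFlip :=
  Equiv.ext fun i => (Equiv.symm_apply_eq _).2 (finAddFlip_finAddFlip i).symm

variable {F : Type}

def blockTranspose (k l : ℕ) (M : gl F (k + l)) : gl F (l + k) :=
  reindex finAddFlip finAddFlip Mᵀ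

theorem blockTranspose_blockTranspose (k l : ℕ) (M : gl F (k + l)) :
    blockTranspose l k (blockTranspose k l M) = M := by
  ext i j
  simp [blockTranspose]

theorem blockTranspose_mul [CommSemiring F] (k l : ℕ) (A B : gl F (k + l)) :
    blockTranspose k l (A * B) = blockTranspose k l B * blockTranspose k l A := by
  simp only [blockTranspose, transpose_mul, reindex_apply, submatrix_mul_equiv]

theorem blockTranspose_one [CommSemiring F] (k l : ℕ) :
    blockTranspose k l (1 : gl F (k + l)) = 1 := by
  simp [blockTranspose]

theorem isBUT_blockTranspose [Field F] (k l : ℕ) (M : gl F (k + l)) :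
    IsBUT l k (blockTranspose k l M) ↔ IsBUT k l M := by
  have : toBlocks₂₁ (blk l k (blockTranspose k l M)) = (toBlocks₂₁ (blk k l M))ᵀ := by
    ext i j
    simp [blk, blockTranspose, toBlocks₂₁]
  rw [IsBUT, IsBUT, this, transpose_eq_zero]

theorem proj_blockTranspose (k l : ℕ) (M : gl F (k + l)) :
    proj l k (blockTranspose k l M) = ((proj k l M).2ᵀ, (proj k l M).1ᵀ) := by
  ext i j <;> simp [proj, blk, blockTranspose, toBlocks₁₁, toBlocks₂₂]

def blockTransposeInvUnit [CommRing F] (k l : ℕ) (g : GL (Fin (k + l)) F) : GL (Fin (l + k)) F :=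
  ⟨blockTranspose k l ↑g⁻¹, blockTranspose k l ↑g,
    by rw [← blockTranspose_mul, Units.mul_inv, blockTranspose_one],
    by rw [← blockTranspose_mul, Units.inv_mul, blockTranspose_one]⟩

def blockTransposeInvEquiv [CommRing F] (k l : ℕ) : GL (Fin (k + l)) F ≃ GL (Fin (l + k)) F where
  toFun := blockTransposeInvUnit k l
  invFun := blockTransposeInvUnit l k
  left_inv _ := Units.ext (blockTranspose_blockTranspose k l _)
  right_inv _ := Units.ext (blockTranspose_blockTranspose l k _)

end BlockTranspose

section ParabolicSum

variable {F : Type} [Field F]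

theorem conjM_mul {n : ℕ} (g u : GL (Fin n) F) (z : gl F n) :
    conjM (g * u) z = conjM g (conjM u z) := by
  simp only [conjM, Units.val_mul, _root_.mul_inv_rev, Matrix.mul_assoc]

theorem exists_conjM_eq_transpose {n : ℕ} (z : gl F n) : ∃ u : GL (Fin n) F, conjM u z = zᵀ :=
  Matrix.exists_mul_mul_inv_eq_transpose z

theorem Invariant.apply_transpose {n : ℕ} {φ : gl F n → ℂ} (hφ : Invariant n φ) (z : gl F n) :
    φ zᵀ = φ z := by
  obtain ⟨u, hu⟩ := exists_conjM_eq_transpose z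
  rw [← hu, hφ]

theorem exists_conjM_eq_blockTranspose_castM (k l : ℕ) (z : gl F (k + l)) :
    ∃ u : GL (Fin (k + l)) F, conjM u z = blockTranspose l k (castM (Nat.add_comm k l) z) := by
  obtain ⟨a, ha⟩ := exists_conjM_eq_transpose z
  obtain ⟨b, hb⟩ :=
    Matrix.exists_mul_mul_inv_eq_reindex ((finCongr (Nat.add_comm k l)).trans finAddFlip) zᵀ
  refine ⟨b * a, ?_⟩
  rw [conjM_mul, ha, conjM, hb]
  ext i j
  simp [blockTranspose, castM]

theorem conjM_blockTransposeInvEquiv (k l : ℕ) (g : GL (Fin (k + l)) F) (z : gl F (k + l)) :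
    conjM (blockTransposeInvEquiv k l g) (blockTranspose k l z) =
      blockTranspose k l (conjM g z) := by
  change blockTranspose k l ↑g⁻¹ * blockTranspose k l z * blockTranspose k l ↑g = _
  rw [← blockTranspose_mul, ← blockTranspose_mul, conjM, Matrix.mul_assoc]

variable [Fintype F] [DecidableEq F]

theorem Pcard_comm (k l : ℕ) : Pcard F k l = Pcard F l k :=
  Nat.card_congr <| ((Equiv.inv _).trans (blockTransposeInvEquiv k l)).subtypeEquiv fun g => by
    simp [blockTransposeInvEquiv, blockTransposeInvUnit, isBUT_blockTranspose]

noncomputable def parabolicSum (k l : ℕ) (h : gl F k × gl F l → ℂ) (z : gl F (k + l)) : ℂ :=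
  ∑ g : GL (Fin (k + l)) F, if IsBUT k l (conjM g z) then h (proj k l (conjM g z)) else 0

theorem HCind_eq_parabolicSum {k l : ℕ} (hk : k ≠ 0) (hl : l ≠ 0) (h : gl F k × gl F l → ℂ)
    (z : gl F (k + l)) : HCind k l h z = (Pcard F k l : ℂ)⁻¹ * parabolicSum k l h z := by
  simp only [HCind, hk, hl, dite_false, parabolicSum]

theorem parabolicSum_conjM (k l : ℕ) (h : gl F k × gl F l → ℂ) (u : GL (Fin (k + l)) F)
    (z : gl F (k + l)) : parabolicSum k l h (conjM u z) = parabolicSum k l h z :=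
  Fintype.sum_equiv (Equiv.mulRight u) _ _ fun g => by
    simp only [Equiv.coe_mulRight, conjM_mul]

theorem parabolicSum_blockTranspose (k l : ℕ) (h : gl F k × gl F l → ℂ) (z : gl F (k + l)) :
    parabolicSum l k (fun p => h (p.2ᵀ, p.1ᵀ)) (blockTranspose k l z) = parabolicSum k l h z := by
  refine (Fintype.sum_equiv (blockTransposeInvEquiv k l) _ _ fun g => ?_).symm
  simp only [conjM_blockTransposeInvEquiv, isBUT_blockTranspose, proj_blockTranspose,
    transpose_transpose]

end ParabolicSum

/-- Harish-Chandra induction is commutative. -/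
theorem HCind_comm (F : Type) [Field F] [Fintype F] [DecidableEq F]
    (k l : ℕ) (hk : 1 ≤ k) (hl : 1 ≤ l)
    (f : gl F k → ℂ) (g : gl F l → ℂ)
    (hf : Invariant k f) (hg : Invariant l g) :
    HCind k l (fun p => f p.1 * g p.2) =
      castFun (Nat.add_comm l k) (HCind l k (fun p => g p.1 * f p.2)) := by
  funext z
  obtain ⟨u, hu⟩ := exists_conjM_eq_blockTranspose_castM k l z
  rw [castFun, HCind_eq_parabolicSum (by omega) (by omega),
    HCind_eq_parabolicSum (by omega) (by omega), Pcard_comm, ← parabolicSum_conjM k l _ u, hu,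
    ← parabolicSum_blockTranspose l k]
  simp only [hf.apply_transpose, hg.apply_transpose, mul_comm]

end HCPaper
end

section
/- For all k, l ≥ 1 with k + l = n: if h is an invariant character of gl_k(𝔽_q) × gl_l(𝔽_q), then R^n_{k,l}(h) is a ℚ_{≥0}-linear combination of invariant characters of gl_n(𝔽_q); and if f is an invariant character of gl_n(𝔽_q), then *R^n_{k,l}(f) is a ℚ_{≥0}-linear combination of invariant characters of gl_k(𝔽_q) × gl_l(𝔽_q). -/
open Matrix BigOperators

/-!
A character of the additive group `gl_{k+l}(𝔽_q)` is the trace of a representation `V`. Averaging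
over the subgroup `U` of matrices `[0 u; 0 0]` is a projection onto the invariants `V^U`, which are
stable under the whole (commutative) group, and the trace of `[x 0; 0 y]` on `V^U` is exactly
`*R f (x, y)`: restriction even sends characters to characters.

For induction, the additive characters of the lower-left block `c` detect `P_{k,l}`:
`∑_ψ ψ(c) = q^{kl} [c = 0]`. Hence `|P^×_{k,l}| q^{kl} R h` is a sum over `g` and `ψ` of products of
the one-dimensional character `z ↦ ψ(c(g z g⁻¹))` with the pullback of `h` along the additive map
`z ↦ π(g z g⁻¹)`; each product is a character, and reindexing `g` shows the sum is invariant.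
-/

theorem LinearMap.trace_restrict_eq_trace_comp_of_isProj {K V : Type*} [Field K]
    [AddCommGroup V] [Module K V] [FiniteDimensional K V] {W : Submodule K V}
    {e : V →ₗ[K] V} (he : LinearMap.IsProj W e) (f : V →ₗ[K] V) (hf : W ≤ W.comap f) :
    LinearMap.trace K W (f.restrict hf) = LinearMap.trace K V (f ∘ₗ e) := by
  rw [← he.subtype_comp_codRestrict, ← LinearMap.comp_assoc, LinearMap.trace_comp_comm']
  congr 1
  ext w
  simp [he.codRestrict_apply_cod ⟨f w, hf w.2⟩]

section Characters

variable {A B : Type} [AddCommGroup A] [AddCommGroup B]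

def IsCharacter (A : Type) [AddCommGroup A] (χ : A → ℂ) : Prop :=
  ∃ V : FDRep ℂ (Multiplicative A), ∀ x : A, V.character (Multiplicative.ofAdd x) = χ x

theorem isCharacter_of_representation {V : Type} [AddCommGroup V] [Module ℂ V]
    [FiniteDimensional ℂ V] (ρ : Representation ℂ (Multiplicative A) V) :
    IsCharacter A fun x => ρ.character (Multiplicative.ofAdd x) :=
  ⟨FDRep.of ρ, fun _ => rfl⟩

theorem IsCharacter.exists_representation {χ : A → ℂ} (hχ : IsCharacter A χ) :
    ∃ (V : Type) (_ : AddCommGroup V) (_ : Module ℂ V) (_ : FiniteDimensional ℂ V)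
      (ρ : Representation ℂ (Multiplicative A) V),
      χ = fun x => ρ.character (Multiplicative.ofAdd x) := by
  obtain ⟨V, hV⟩ := hχ
  exact ⟨V, _, _, inferInstance, V.ρ, funext fun x => (hV x).symm⟩

theorem isCharacter_zero : IsCharacter A 0 := by
  convert isCharacter_of_representation (Representation.trivial ℂ (Multiplicative A) PUnit)
  simp [Representation.character]

theorem IsCharacter.add {χ₁ χ₂ : A → ℂ} (h₁ : IsCharacter A χ₁) (h₂ : IsCharacter A χ₂) :
    IsCharacter A (χ₁ + χ₂) := by
  obtain ⟨V₁, _, _, _, ρ₁, rfl⟩ := h₁.exists_representation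
  obtain ⟨V₂, _, _, _, ρ₂, rfl⟩ := h₂.exists_representation
  convert isCharacter_of_representation (ρ₁.prod ρ₂)
  exact (LinearMap.trace_prodMap' _ _).symm

theorem isCharacter_sum {ι : Type*} (s : Finset ι) {χ : ι → A → ℂ}
    (h : ∀ i ∈ s, IsCharacter A (χ i)) : IsCharacter A (∑ i ∈ s, χ i) := by
  induction s using Finset.cons_induction with
  | empty => exact isCharacter_zero
  | cons a s ha ih =>
    rw [Finset.sum_cons]
    exact (h a (s.mem_cons_self a)).add (ih fun i hi => h i (Finset.mem_cons_of_mem hi))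

theorem IsCharacter.mul {χ₁ χ₂ : A → ℂ} (h₁ : IsCharacter A χ₁) (h₂ : IsCharacter A χ₂) :
    IsCharacter A (χ₁ * χ₂) := by
  obtain ⟨V₁, _, _, _, ρ₁, rfl⟩ := h₁.exists_representation
  obtain ⟨V₂, _, _, _, ρ₂, rfl⟩ := h₂.exists_representation
  convert isCharacter_of_representation (ρ₁.tprod ρ₂)
  rw [Representation.char_tensor]
  rfl

theorem AddChar.isCharacter (ψ : AddChar A ℂ) : IsCharacter A ψ := by
  convert isCharacter_of_representation
    ((algebraMap ℂ (Module.End ℂ ℂ) : ℂ →* Module.End ℂ ℂ).comp ψ.toMonoidHom)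
  simp [Representation.character, Module.algebraMap_end_eq_smul_id]

theorem IsCharacter.comp {χ : A → ℂ} (hχ : IsCharacter A χ) (φ : B →+ A) :
    IsCharacter B (χ ∘ φ) := by
  obtain ⟨V, _, _, _, ρ, rfl⟩ := hχ.exists_representation
  exact isCharacter_of_representation (ρ.comp φ.toMultiplicative)

theorem IsCharacter.average {N : Type} [AddCommGroup N] [Fintype N] {χ : A → ℂ}
    (hχ : IsCharacter A χ) (φ : B →+ A) (ι : N →+ A) :
    IsCharacter B fun b => (Fintype.card N : ℂ)⁻¹ * ∑ n, χ (φ b + ι n) := by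
  obtain ⟨V, _, _, _, ρ, rfl⟩ := hχ.exists_representation
  set σ : Representation ℂ (Multiplicative N) V := ρ.comp ι.toMultiplicative
  have : Invertible (Fintype.card (Multiplicative N) : ℂ) :=
    invertibleOfNonzero (Nat.cast_ne_zero.2 Fintype.card_ne_zero)
  have hW (a : Multiplicative A) : σ.invariants ≤ σ.invariants.comap (ρ a) := fun v hv n => by
    change ρ (ι.toMultiplicative n) (ρ a v) = ρ a v
    rw [← Module.End.mul_apply, ← map_mul, mul_comm, map_mul, Module.End.mul_apply]
    exact congrArg (ρ a) (hv n)
  convert isCharacter_of_representation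
    (Representation.subrepresentation (ρ.comp φ.toMultiplicative) σ.invariants fun b => hW _) with b
  rw [Representation.character, Representation.subrepresentation_apply,
    LinearMap.trace_restrict_eq_trace_comp_of_isProj σ.isProj_averageMap]
  have hσ : σ.averageMap = (Fintype.card N : ℂ)⁻¹ • ∑ n, σ n := by
    simp [GroupAlgebra.average, map_sum, invOf_eq_inv]
  rw [hσ, ← Module.End.mul_eq_comp, mul_smul_comm, map_smul, smul_eq_mul]
  congr 1
  rw [Finset.mul_sum, map_sum]
  exact Fintype.sum_equiv Multiplicative.ofAdd _ _ fun n => by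
    simp [Representation.character, σ, ofAdd_add]

end Characters

theorem exists_nonneg_rat_combination_of_eq_smul {X : Type*} {P : (X → ℂ) → Prop}
    {f χ : X → ℂ} {c : ℚ} (hc : 0 ≤ c) (hχ : P χ) (hf : f = (c : ℂ) • χ) :
    ∃ (r : ℕ) (co : Fin r → ℚ) (χs : Fin r → X → ℂ),
      (∀ i, 0 ≤ co i) ∧ (∀ i, P (χs i)) ∧ f = ∑ i, (co i : ℂ) • χs i :=
  ⟨1, fun _ => c, fun _ => χ, fun _ => hc, fun _ => hχ, by simp [hf]⟩

namespace HCPaper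

section BlockMatrices

variable {F : Type} [Field F]

theorem conjM_conjM {n : ℕ} (g g' : GL (Fin n) F) (x : gl F n) :
    conjM g (conjM g' x) = conjM (g * g') x := by
  simp [conjM, Matrix.mul_assoc]

def conjAddHom {n : ℕ} (g : GL (Fin n) F) : gl F n →+ gl F n :=
  AddMonoidHom.mk' (conjM g) fun x y => by simp [conjM, Matrix.mul_add, Matrix.add_mul]

def lowerBlockAddHom (k l : ℕ) : gl F (k + l) →+ Matrix (Fin l) (Fin k) F :=
  AddMonoidHom.mk' (fun m => (blk k l m).toBlocks₂₁) fun x y => by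
    ext; simp [blk, Matrix.toBlocks₂₁]

def projAddHom (k l : ℕ) : gl F (k + l) →+ gl F k × gl F l :=
  AddMonoidHom.mk' (proj k l) fun x y => by
    ext <;> simp [proj, blk, Matrix.toBlocks₁₁, Matrix.toBlocks₂₂]

theorem but_add_but (k l : ℕ) (x x' : gl F k) (u u' : Matrix (Fin k) (Fin l) F)
    (y y' : gl F l) :
    but k l x u y + but k l x' u' y' = but k l (x + x') (u + u') (y + y') := by
  ext i j
  simp only [but, reindex_apply, Matrix.add_apply, submatrix_apply]
  rw [← Matrix.add_apply, fromBlocks_add, add_zero]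

theorem but_mul_but (k l : ℕ) (x x' : gl F k) (u u' : Matrix (Fin k) (Fin l) F)
    (y y' : gl F l) :
    but k l x u y * but k l x' u' y' = but k l (x * x') (x * u' + u * y') (y * y') := by
  simp [but, Matrix.submatrix_mul_equiv, Matrix.fromBlocks_multiply]

theorem but_one (k l : ℕ) : but k l (1 : gl F k) 0 (1 : gl F l) = 1 := by
  simp [but, Matrix.fromBlocks_one]

def blockDiagGL {k l : ℕ} (g₁ : GL (Fin k) F) (g₂ : GL (Fin l) F) : GL (Fin (k + l)) F where
  val := but k l g₁ 0 g₂
  inv := but k l ↑g₁⁻¹ 0 ↑g₂⁻¹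
  val_inv := by simp [but_mul_but, but_one]
  inv_val := by simp [but_mul_but, but_one]

theorem conjM_blockDiagGL_but {k l : ℕ} (g₁ : GL (Fin k) F) (g₂ : GL (Fin l) F) (x : gl F k)
    (u : Matrix (Fin k) (Fin l) F) (y : gl F l) :
    conjM (blockDiagGL g₁ g₂) (but k l x u y) =
      but k l (conjM g₁ x) ((g₁ : gl F k) * u * ((g₂⁻¹ : GL (Fin l) F) : gl F l)) (conjM g₂ y) := by
  simp [conjM, blockDiagGL, but_mul_but, Matrix.mul_assoc]

def blockDiagAddHom (k l : ℕ) : gl F k × gl F l →+ gl F (k + l) :=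
  AddMonoidHom.mk' (fun p => but k l p.1 0 p.2) fun p p' => by simp [but_add_but]

def upperBlockAddHom (k l : ℕ) : Matrix (Fin k) (Fin l) F →+ gl F (k + l) :=
  AddMonoidHom.mk' (fun u => but k l 0 u 0) fun u u' => by simp [but_add_but]

end BlockMatrices

section Induction

variable {F : Type} [Field F] [Fintype F] [DecidableEq F]

noncomputable def HCindFourier (k l : ℕ) (h : gl F k × gl F l → ℂ) : gl F (k + l) → ℂ :=
  ∑ g : GL (Fin (k + l)) F, ∑ ψ : AddChar (Matrix (Fin l) (Fin k) F) ℂ,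
    ⇑(ψ.compAddMonoidHom ((lowerBlockAddHom k l).comp (conjAddHom g))) *
      h ∘ (projAddHom k l).comp (conjAddHom g)

theorem isCharacter_HCindFourier {k l : ℕ} {h : gl F k × gl F l → ℂ}
    (hh : IsCharacter (gl F k × gl F l) h) : IsCharacter (gl F (k + l)) (HCindFourier k l h) :=
  isCharacter_sum _ fun _ _ => isCharacter_sum _ fun ψ _ =>
    (ψ.compAddMonoidHom _).isCharacter.mul (hh.comp _)

theorem invariant_HCindFourier (k l : ℕ) (h : gl F k × gl F l → ℂ) :
    Invariant (k + l) (HCindFourier k l h) := by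
  intro g₀ z
  simp only [HCindFourier, Finset.sum_apply]
  exact Fintype.sum_equiv (Equiv.mulRight g₀) _ _ fun g => by
    simp [conjAddHom, conjM_conjM]

theorem HCind_eq_smul_HCindFourier {k l : ℕ} (hk : k ≠ 0) (hl : l ≠ 0)
    (h : gl F k × gl F l → ℂ) :
    HCind k l h = (((Pcard F k l * Fintype.card (Matrix (Fin l) (Fin k) F) : ℚ)⁻¹ : ℚ) : ℂ) •
      HCindFourier k l h := by
  funext z
  simp only [HCind, dif_neg hk, dif_neg hl, HCindFourier, Finset.sum_apply, Pi.smul_apply]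
  simp only [Pi.mul_apply, AddChar.compAddMonoidHom_apply, Function.comp_apply, ← Finset.sum_mul,
    AddChar.sum_apply_eq_ite]
  have hQ : (Fintype.card (Matrix (Fin l) (Fin k) F) : ℂ) ≠ 0 :=
    Nat.cast_ne_zero.2 Fintype.card_ne_zero
  push_cast
  rw [mul_inv, smul_eq_mul, mul_assoc]
  congr 1
  rw [Finset.mul_sum]
  refine Finset.sum_congr rfl fun g _ => ?_
  split_ifs with hP hL hL
  · field_simp
    rfl
  · exact absurd hP hL
  · exact absurd hL hP
  · simp

end Induction

section Restriction

variable {F : Type} [Field F] [Fintype F]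

theorem HCres_eq_average {k l : ℕ} (hk : k ≠ 0) (hl : l ≠ 0) (f : gl F (k + l) → ℂ) :
    HCres k l f = fun p => (Fintype.card (Matrix (Fin k) (Fin l) F) : ℂ)⁻¹ *
      ∑ u, f (blockDiagAddHom k l p + upperBlockAddHom k l u) := by
  have hcard : Fintype.card (Matrix (Fin k) (Fin l) F) = Fintype.card F ^ (k * l) := by
    simp [Fintype.card_congr Matrix.of.symm, ← pow_mul, mul_comm]
  funext p
  simp [HCres, hk, hl, blockDiagAddHom, upperBlockAddHom, but_add_but, hcard]

theorem isChar₂_HCres [DecidableEq F] {k l : ℕ} (hk : k ≠ 0) (hl : l ≠ 0)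
    {f : gl F (k + l) → ℂ} (hf : IsChar (k + l) f) : IsChar₂ k l (HCres k l f) := by
  rw [HCres_eq_average hk hl]
  exact IsCharacter.average hf _ _

theorem invariant₂_HCres {k l : ℕ} (hk : k ≠ 0) (hl : l ≠ 0) {f : gl F (k + l) → ℂ}
    (hf : Invariant (k + l) f) : Invariant₂ k l (HCres k l f) := by
  intro g₁ g₂ x y
  simp only [HCres, dif_neg hk, dif_neg hl]
  congr 1
  let e : Matrix (Fin k) (Fin l) F ≃ Matrix (Fin k) (Fin l) F :=
    { toFun := fun u => (g₁ : gl F k) * u * ((g₂⁻¹ : GL (Fin l) F) : gl F l)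
      invFun := fun u => ((g₁⁻¹ : GL (Fin k) F) : gl F k) * u * (g₂ : gl F l)
      left_inv := fun u => by simp [Matrix.mul_assoc]
      right_inv := fun u => by simp [Matrix.mul_assoc] }
  calc ∑ u, f (but k l (conjM g₁ x) u (conjM g₂ y))
      = ∑ u, f (but k l (conjM g₁ x) (e u) (conjM g₂ y)) := (e.sum_comp _).symm
    _ = ∑ u, f (but k l x u y) := Finset.sum_congr rfl fun u _ => by
      rw [← hf (blockDiagGL g₁ g₂) (but k l x u y), conjM_blockDiagGL_but]
      rfl

end Restriction

/-- Harish-Chandra induction and restriction take invariant characters to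
`ℚ_{≥0}`-linear combinations of invariant characters. -/
theorem HC_nonneg_rat_combinations (F : Type) [Field F] [Fintype F] [DecidableEq F]
    (k l : ℕ) (hk : 1 ≤ k) (hl : 1 ≤ l) :
    (∀ h : gl F k × gl F l → ℂ, IsInvChar₂ k l h →
      ∃ (r : ℕ) (co : Fin r → ℚ) (χ : Fin r → (gl F (k + l) → ℂ)),
        (∀ i, 0 ≤ co i) ∧ (∀ i, IsInvChar (k + l) (χ i)) ∧
          HCind k l h = ∑ i, (co i : ℂ) • χ i) ∧
    (∀ f : gl F (k + l) → ℂ, IsInvChar (k + l) f →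
      ∃ (r : ℕ) (co : Fin r → ℚ) (χ : Fin r → (gl F k × gl F l → ℂ)),
        (∀ i, 0 ≤ co i) ∧ (∀ i, IsInvChar₂ k l (χ i)) ∧
          HCres k l f = ∑ i, (co i : ℂ) • χ i) := by
  have hk₀ : k ≠ 0 := by omega
  have hl₀ : l ≠ 0 := by omega
  refine ⟨fun h hh => ?_, fun f hf => ?_⟩
  · exact exists_nonneg_rat_combination_of_eq_smul (by positivity)
      ⟨isCharacter_HCindFourier hh.1, invariant_HCindFourier k l h⟩
      (HCind_eq_smul_HCindFourier hk₀ hl₀ h)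
  · exact exists_nonneg_rat_combination_of_eq_smul zero_le_one
      ⟨isChar₂_HCres hk₀ hl₀ hf.1, invariant₂_HCres hk₀ hl₀ hf.2⟩ (by simp)

end HCPaper
end

section
/- Let 1_{gl_1} ∈ C_1 and 1_{gl_2} ∈ C_2 be the constant functions with value 1. Then: (a) (1_{gl_1}, 1_{gl_1})_1 = q/(q-1); (b) (1_{gl_2}, 1_{gl_2})_2 = q³/((q-1)²(q+1)); (c) setting u₁ = √((q-1)/q)·1_{gl_1} and u₂ = √((q-1)²(q+1)/q³)·1_{gl_2} (the corresponding unit vectors), one has (R^2_{1,1}(u₁ ⊠ u₁), u₂)_2 = √((q+1)/q); and (d) √((q+1)/q) is not a rational number. -/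
open Matrix BigOperators

/-!
The constant functions are invariant, so everything reduces to counting: `(1, 1)_n = q^{n²} / |GL_n|`.
For `R^{k+l}_{k,l}` of a constant, exchanging the sums over `z ∈ gl_{k+l}` and `g ∈ GL_{k+l}` and
substituting `z ↦ g z g⁻¹` turns every inner sum into the number `q^{k² + kl + l²}` of block
upper-triangular matrices, while `|P^×_{k,l}| = |GL_k| q^{kl} |GL_l|`; hence
`(R^{k+l}_{k,l}(a), b)_{k+l} = (1, 1)_k (1, 1)_l a b̄`. For `k = l = 1` this gives
`(q/(q-1))² · (q-1)/q · (q-1)/q · √((q+1)/q)`. Finally `√((q+1)/q) = √(q(q+1))/q`, and `q(q+1)` lies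
strictly between the consecutive squares `q²` and `(q+1)²`.
-/

lemma card_matrix {α : Type*} [Fintype α] (m n : ℕ) :
    Nat.card (Matrix (Fin m) (Fin n) α) = Fintype.card α ^ (m * n) := by
  rw [← Nat.card_congr (Matrix.of (α := α) (m := Fin m) (n := Fin n))]
  simp [pow_mul']

lemma sqrt_sub_one_sq_mul_add_one_div_pow_three {x : ℝ} (hx : 1 ≤ x) :
    √((x - 1) ^ 2 * (x + 1) / x ^ 3) = (x - 1) / x * √((x + 1) / x) := by
  rw [show (x - 1) ^ 2 * (x + 1) / x ^ 3 = ((x - 1) / x) ^ 2 * ((x + 1) / x) by ring,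
    Real.sqrt_mul (sq_nonneg _), Real.sqrt_sq (div_nonneg (by linarith) (by linarith))]

lemma irrational_sqrt_add_one_div {q : ℕ} (hq : q ≠ 0) : Irrational √(((q : ℝ) + 1) / q) := by
  have hsqrt : √(((q : ℝ) + 1) / q) = √((q * (q + 1) : ℕ) : ℝ) / q := by
    have hq' : (q : ℝ) ≠ 0 := Nat.cast_ne_zero.2 hq
    rw [show ((q : ℝ) + 1) / q = ((q * (q + 1) : ℕ) : ℝ) / (q : ℝ) ^ 2 by push_cast; field_simp,
      Real.sqrt_div' _ (sq_nonneg _), Real.sqrt_sq (Nat.cast_nonneg q)]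
  have hsq : ¬IsSquare (q * (q + 1)) := by
    rintro ⟨r, hr⟩
    exact Nat.not_exists_sq (m := q) (by nlinarith [Nat.pos_of_ne_zero hq]) (by nlinarith) ⟨r, hr.symm⟩
  rw [hsqrt]
  exact (irrational_sqrt_natCast_iff.2 hsq).div_natCast hq

namespace HCPaper

section Blocks

variable {F : Type} [Field F]

lemma blk_but (k l : ℕ) (x : gl F k) (u : Matrix (Fin k) (Fin l) F) (y : gl F l) :
    blk k l (but k l x u y) = Matrix.fromBlocks x u 0 y := by
  simp [blk, but]

lemma isBUT_but (k l : ℕ) (x : gl F k) (u : Matrix (Fin k) (Fin l) F) (y : gl F l) :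
    IsBUT k l (but k l x u y) := by
  simp [IsBUT, blk_but]

lemma but_blk {k l : ℕ} {m : gl F (k + l)} (hm : IsBUT k l m) :
    but k l (blk k l m).toBlocks₁₁ (blk k l m).toBlocks₁₂ (blk k l m).toBlocks₂₂ = m := by
  rw [but, ← hm, Matrix.fromBlocks_toBlocks]
  simp [blk]

def butEquiv (k l : ℕ) :
    {m : gl F (k + l) // IsBUT k l m} ≃ gl F k × Matrix (Fin k) (Fin l) F × gl F l where
  toFun m := ((blk k l m).toBlocks₁₁, (blk k l m).toBlocks₁₂, (blk k l m).toBlocks₂₂)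
  invFun p := ⟨but k l p.1 p.2.1 p.2.2, isBUT_but ..⟩
  left_inv m := Subtype.ext (but_blk m.2)
  right_inv p := by simp [blk_but]

lemma det_eq_of_isBUT {k l : ℕ} {m : gl F (k + l)} (hm : IsBUT k l m) :
    m.det = (blk k l m).toBlocks₁₁.det * (blk k l m).toBlocks₂₂.det := by
  rw [← Matrix.det_fromBlocks_zero₂₁, ← hm, Matrix.fromBlocks_toBlocks, blk, Matrix.det_reindex_self]

noncomputable def butUnitsEquiv (k l : ℕ) :
    {g : GL (Fin (k + l)) F // IsBUT k l (g : gl F (k + l))} ≃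
      GL (Fin k) F × Matrix (Fin k) (Fin l) F × GL (Fin l) F where
  toFun g :=
    let M := blk k l (g.1 : gl F (k + l))
    have h : M.toBlocks₁₁.det * M.toBlocks₂₂.det ≠ 0 :=
      det_eq_of_isBUT g.2 ▸ Matrix.GeneralLinearGroup.det_ne_zero g.1
    (.mkOfDetNeZero M.toBlocks₁₁ (left_ne_zero_of_mul h), M.toBlocks₁₂,
      .mkOfDetNeZero M.toBlocks₂₂ (right_ne_zero_of_mul h))
  invFun p := ⟨.mkOfDetNeZero (but k l p.1 p.2.1 p.2.2) (by
      rw [det_eq_of_isBUT (isBUT_but ..), blk_but]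
      exact mul_ne_zero (Matrix.GeneralLinearGroup.det_ne_zero _)
        (Matrix.GeneralLinearGroup.det_ne_zero _)), isBUT_but ..⟩
  left_inv g := Subtype.ext (Units.ext (but_blk g.2))
  right_inv p := by
    ext <;> simp [Matrix.GeneralLinearGroup.mkOfDetNeZero, blk_but]

def conjEquiv {n : ℕ} (g : GL (Fin n) F) : gl F n ≃ gl F n where
  toFun := conjM g
  invFun := conjM g⁻¹
  left_inv z := by simp [conjM, Matrix.mul_assoc]
  right_inv z := by simp [conjM, Matrix.mul_assoc]

end Blocks

section Counting

variable {F : Type} [Field F] [Fintype F]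

lemma card_isBUT (k l : ℕ) :
    Nat.card {m : gl F (k + l) // IsBUT k l m} = Fintype.card F ^ (k * k + k * l + l * l) := by
  simp only [Nat.card_congr (butEquiv k l), Nat.card_prod, card_matrix, pow_add]
  ring

lemma natCast_card_GL (n : ℕ) :
    (Nat.card (GL (Fin n) F) : ℂ) = ∏ i : Fin n, ((Fintype.card F : ℂ) ^ n - Fintype.card F ^ (i : ℕ)) := by
  rw [Matrix.card_GL_field, Nat.cast_prod]
  refine Finset.prod_congr rfl fun i _ => ?_
  rw [Nat.cast_sub (Nat.pow_le_pow_right Fintype.card_pos i.2.le), Nat.cast_pow, Nat.cast_pow]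

variable [DecidableEq F]

lemma pcard_eq (k l : ℕ) :
    Pcard F k l = Nat.card (GL (Fin k) F) * Fintype.card F ^ (k * l) * Nat.card (GL (Fin l) F) := by
  simp only [Pcard, Nat.card_congr (butUnitsEquiv k l), Nat.card_prod, card_matrix, mul_assoc]

lemma sum_HCind_const {k l : ℕ} (hk : k ≠ 0) (hl : l ≠ 0) (c : ℂ) :
    ∑ z, HCind (F := F) k l (fun _ => c) z =
      Nat.card (GL (Fin (k + l)) F) * Nat.card {m : gl F (k + l) // IsBUT k l m} /
        Pcard F k l * c := by
  classical
  have hcount (g : GL (Fin (k + l)) F) :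
      ∑ z, (if IsBUT k l (conjM g z) then c else 0) =
        Nat.card {m : gl F (k + l) // IsBUT k l m} * c := by
    refine ((conjEquiv g).sum_comp (fun m => if IsBUT k l m then c else 0)).trans ?_
    simp [Finset.sum_ite, Nat.card_eq_fintype_card, Fintype.card_subtype]
  simp only [HCind, dif_neg hk, dif_neg hl]
  rw [← Finset.mul_sum, Finset.sum_comm, Finset.sum_congr rfl fun g _ => hcount g]
  simp only [Nat.card_eq_fintype_card, Finset.sum_const, Finset.card_univ, nsmul_eq_mul]
  ring

lemma inn_const_right (n : ℕ) (f : gl F n → ℂ) (b : ℂ) :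
    inn n f (fun _ => b) = (∑ x, f x) / Nat.card (GL (Fin n) F) * starRingEnd ℂ b := by
  rw [inn, ← Finset.sum_mul, Nat.card_eq_fintype_card]
  ring

lemma inn_one_one (n : ℕ) :
    inn n (fun _ : gl F n => (1 : ℂ)) (fun _ => 1) =
      (Fintype.card F : ℂ) ^ (n * n) / Nat.card (GL (Fin n) F) := by
  simp [inn_const_right, ← Nat.card_eq_fintype_card, card_matrix]

lemma inn_HCind_const_const {k l : ℕ} (hk : k ≠ 0) (hl : l ≠ 0) (a b : ℂ) :
    inn (k + l) (HCind (F := F) k l fun _ => a) (fun _ => b) =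
      inn k (fun _ : gl F k => (1 : ℂ)) (fun _ => 1) * inn l (fun _ : gl F l => (1 : ℂ)) (fun _ => 1) *
        (a * starRingEnd ℂ b) := by
  have hGLk : (Nat.card (GL (Fin k) F) : ℂ) ≠ 0 := Nat.cast_ne_zero.2 Nat.card_pos.ne'
  have hGLl : (Nat.card (GL (Fin l) F) : ℂ) ≠ 0 := Nat.cast_ne_zero.2 Nat.card_pos.ne'
  have hGL : (Nat.card (GL (Fin (k + l)) F) : ℂ) ≠ 0 := Nat.cast_ne_zero.2 Nat.card_pos.ne'
  have hq : (Fintype.card F : ℂ) ≠ 0 := Nat.cast_ne_zero.2 Fintype.card_ne_zero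
  rw [inn_const_right, sum_HCind_const hk hl, inn_one_one, inn_one_one, card_isBUT, pcard_eq]
  push_cast
  field_simp
  ring

lemma inn_one_one_gl_one :
    inn 1 (fun _ : gl F 1 => (1 : ℂ)) (fun _ => 1) =
      (Fintype.card F : ℂ) / ((Fintype.card F : ℂ) - 1) := by
  rw [inn_one_one, natCast_card_GL]
  simp

lemma inn_one_one_gl_two :
    inn 2 (fun _ : gl F 2 => (1 : ℂ)) (fun _ => 1) =
      (Fintype.card F : ℂ) ^ 3 / (((Fintype.card F : ℂ) - 1) ^ 2 * ((Fintype.card F : ℂ) + 1)) := by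
  set q : ℂ := (Fintype.card F : ℂ)
  have hq : q ≠ 0 := Nat.cast_ne_zero.2 Fintype.card_ne_zero
  rw [inn_one_one, natCast_card_GL, Fin.prod_univ_two]
  calc q ^ (2 * 2) / ((q ^ 2 - q ^ 0) * (q ^ 2 - q ^ 1))
      = (q * q ^ 3) / (q * ((q - 1) ^ 2 * (q + 1))) := by ring_nf
    _ = q ^ 3 / ((q - 1) ^ 2 * (q + 1)) := mul_div_mul_left _ _ hq

end Counting

/-- the computations exhibiting non-descent of the real PSH algebra:
norms of the constant functions `1` on `gl_1` and `gl_2`, the inner product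
`(R^2_{1,1}(u₁ ⊠ u₁), u₂)_2 = √((q+1)/q)`, and its irrationality. -/
theorem nondescending_computations (F : Type) [Field F] [Fintype F] [DecidableEq F] :
    inn 1 (fun _ : gl F 1 => (1 : ℂ)) (fun _ : gl F 1 => (1 : ℂ)) =
        (Fintype.card F : ℂ) / ((Fintype.card F : ℂ) - 1) ∧
    inn 2 (fun _ : gl F 2 => (1 : ℂ)) (fun _ : gl F 2 => (1 : ℂ)) =
        (Fintype.card F : ℂ) ^ 3 /
          (((Fintype.card F : ℂ) - 1) ^ 2 * ((Fintype.card F : ℂ) + 1)) ∧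
    inn 2
        (HCind 1 1 fun _ : gl F 1 × gl F 1 =>
          ((Real.sqrt (((Fintype.card F : ℝ) - 1) / (Fintype.card F : ℝ)) : ℝ) : ℂ) *
          ((Real.sqrt (((Fintype.card F : ℝ) - 1) / (Fintype.card F : ℝ)) : ℝ) : ℂ))
        (fun _ : gl F 2 =>
          ((Real.sqrt ((((Fintype.card F : ℝ) - 1) ^ 2 * ((Fintype.card F : ℝ) + 1)) /
              (Fintype.card F : ℝ) ^ 3) : ℝ) : ℂ)) =
      ((Real.sqrt (((Fintype.card F : ℝ) + 1) / (Fintype.card F : ℝ)) : ℝ) : ℂ) ∧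
    Irrational (Real.sqrt (((Fintype.card F : ℝ) + 1) / (Fintype.card F : ℝ))) := by
  have hq : 1 < Fintype.card F := Fintype.one_lt_card
  refine ⟨inn_one_one_gl_one, inn_one_one_gl_two, ?_, irrational_sqrt_add_one_div (by omega)⟩
  have hcoeff : ∀ x : ℝ, 1 < x → x / (x - 1) * (x / (x - 1)) *
      (√((x - 1) / x) * √((x - 1) / x) * √((x - 1) ^ 2 * (x + 1) / x ^ 3)) = √((x + 1) / x) := by
    intro x hx
    rw [Real.mul_self_sqrt (div_nonneg (by linarith) (by linarith)),
      sqrt_sub_one_sq_mul_add_one_div_pow_three hx.le]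
    field_simp [sub_ne_zero.2 hx.ne']
  refine (inn_HCind_const_const one_ne_zero one_ne_zero _ _).trans ?_
  rw [inn_one_one_gl_one, Complex.conj_ofReal]
  have h := congrArg Complex.ofReal (hcoeff (Fintype.card F) (by exact_mod_cast hq))
  push_cast at h
  exact h

end HCPaper
end
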